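/- arXiv:2506.23251 — 2 statements merged into one kernel-verified Lean document; each statement's English description precedes it below -/
import Mathlib

section
/- In the setting of unipotent stabilization (L/K quadratic Galois, char K ≠ 2, τ the nontrivial Galois element, θ the induced semilinear involution of W_L = L ⊗_K W_K), assume additionally that W_+ = θ(W_-) and W_- = θ(W_+), and let φ_± : W_± → θ(W_∓) = W_± be L-linear isomorphisms with φ_-^τ ∘ φ_+ = id_{W_+} + n, n nilpotent. Define φ̃_± := (1/2)(φ_± + (φ_∓^τ)^{-1}). Then: (1) if φ_+ ∘ φ_-^τ = φ_-^τ ∘ φ_+ and φ_- ∘ φ_+^τ = φ_+^τ ∘ φ_-, then φ̃_+ ∘ φ̃_-^τ = φ̃_-^τ ∘ φ̃_+ and φ̃_- ∘ φ̃_+^τ = φ̃_+^τ ∘ φ̃_-; (2) if in addition φ_± = id_{W_±} + m_± with m_± nilpotent, then φ̃_± = id_{W_±} + m̃_± with m̃_± nilpotent. -/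
/-!
Restricting `θ` gives a `τ`-semilinear isomorphism `e : W₊ ≃ W₋`, and conjugation by `e` is a
`τ`-semilinear ring isomorphism `End W₋ ≃ End W₊`; since `Gal(L/K)` has order `2`, `τ² = 1` and
`τ` fixes `½`. With `u = φ₊` and `v = φ₋^τ` this gives `φ̃₊ = ½(u + v⁻¹)` and `φ̃₋^τ = ½(v + u⁻¹)`,
which commute as soon as `u` and `v` do. If moreover `u - 1` and `v - 1 = (φ₋ - 1)^τ` are
nilpotent, then so is `v⁻¹ - 1 = -(v - 1)v⁻¹`, and `φ̃₊ - 1 = ½(u - 1) + ½(v⁻¹ - 1)` is a sum of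
commuting nilpotents. The statements for `φ̃₋` are the same with `e` replaced by `e⁻¹`.
-/

open scoped TensorProduct

/-- The `τ`-semilinear involution `θ : L ⊗[K] W_K → L ⊗[K] W_K`,
`a ⊗ w ↦ τ(a) ⊗ w`, induced by a Galois automorphism `τ ∈ Gal(L/K)`. -/
noncomputable def thetaMap (K L : Type*) [Field K] [Field L] [Algebra K L]
    (τ : L ≃ₐ[K] L) (WK : Type*) [AddCommGroup WK] [Module K WK] :
    (L ⊗[K] WK) → (L ⊗[K] WK) :=
  fun x => LinearMap.rTensor WK τ.toLinearMap x

/-- The `τ`-conjugate `φ^τ := θ ∘ φ ∘ θ` of a map `φ : A → B` between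
subspaces, as a map `C → D` (where `θ` maps `C` into `A` and `B` into `D`). -/
def conjFun {L : Type*} [Field L] {WL : Type*} [AddCommGroup WL] [Module L WL]
    (θ : WL → WL) (A B C D : Submodule L WL) (f : ↥A → ↥B)
    (h1 : ∀ x : WL, x ∈ C → θ x ∈ A) (h2 : ∀ x : WL, x ∈ B → θ x ∈ D) :
    ↥C → ↥D :=
  fun x => ⟨θ ((f ⟨θ (x : WL), h1 x x.2⟩ : ↥B) : WL),
    h2 _ (f ⟨θ (x : WL), h1 x x.2⟩).2⟩

/-- One step of unipotent stabilization: it replaces the pair `(φ₊, φ₋)` with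
the pair `(½(φ₊ + (φ₋^τ)⁻¹), ½(φ₋ + (φ₊^τ)⁻¹))`. -/
noncomputable def stabStep {L : Type*} [Field L] {WL : Type*} [AddCommGroup WL]
    [Module L WL] (θ : WL → WL) (Wp Wm Tp Tm : Submodule L WL)
    (h1 : ∀ x : WL, x ∈ Tp → θ x ∈ Wm) (h2 : ∀ x : WL, x ∈ Tm → θ x ∈ Wp)
    (fp : ↥Wp → ↥Tp) (fm : ↥Wm → ↥Tm) : (↥Wp → ↥Tp) × (↥Wm → ↥Tm) :=
  (fun x => (2 : L)⁻¹ • (fp x + Function.invFun (conjFun θ Wm Tm Tp Wp fm h1 h2) x),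
   fun y => (2 : L)⁻¹ • (fm y + Function.invFun (conjFun θ Wp Tp Tm Wm fp h2 h1) y))

section UnitsNilpotent

variable {R : Type*} [Ring R]

theorem Units.commute_add_inv_add_inv {u v : Rˣ} (h : Commute (u : R) v) :
    Commute ((u : R) + ↑v⁻¹) ((v : R) + ↑u⁻¹) :=
  (h.add_right (Commute.refl _).units_inv_right).add_left
    ((Commute.refl _).units_inv_left.add_right h.units_inv_right.symm.units_inv_right)

theorem Units.isNilpotent_inv_sub_one {u : Rˣ} (h : IsNilpotent ((u : R) - 1)) :
    IsNilpotent ((↑u⁻¹ : R) - 1) := by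
  have hcomm : Commute (-((u : R) - 1)) ↑u⁻¹ :=
    ((Commute.refl _).sub_left (Commute.one_left _)).neg_left.units_inv_right
  rw [show (↑u⁻¹ : R) - 1 = -((u : R) - 1) * ↑u⁻¹ by
    rw [neg_mul, sub_mul, Units.mul_inv, one_mul, neg_sub]]
  exact hcomm.isNilpotent_mul_right h.neg

theorem isNilpotent_half_smul_add_sub_one {L : Type*} [Field L] [Algebra L R]
    (h2 : (2 : L) ≠ 0) {a b : R} (hab : Commute a b)
    (ha : IsNilpotent (a - 1)) (hb : IsNilpotent (b - 1)) :
    IsNilpotent ((2 : L)⁻¹ • (a + b) - 1) := by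
  have hsplit : (2 : L)⁻¹ • (a + b) - 1 = (2 : L)⁻¹ • (a - 1) + (2 : L)⁻¹ • (b - 1) := by
    have hone : (1 : R) = (2 : L)⁻¹ • (1 : R) + (2 : L)⁻¹ • (1 : R) := by
      rw [← add_smul, ← two_mul, mul_inv_cancel₀ h2, one_smul]
    rw [smul_sub, smul_sub, smul_add]
    nth_rewrite 1 [hone]
    abel
  rw [hsplit]
  exact (((hab.sub_right (Commute.one_right _)).sub_left (Commute.one_left _)).smul_left _
    |>.smul_right _).isNilpotent_add (ha.smul _) (hb.smul _)

end UnitsNilpotent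

section Stabilize

variable {L : Type*} [Field L] {σ : L →+* L} [RingHomInvPair σ σ]
  {M N : Type*} [AddCommGroup M] [Module L M] [AddCommGroup N] [Module L N]

/-- `½(u + (w^e)⁻¹)` with `w^e = e⁻¹ ∘ w ∘ e`: the paper's `φ̃₊` for `u = φ₊`, `w = φ₋`. -/
noncomputable def stabilize (e : M ≃ₛₗ[σ] N) (u : (Module.End L M)ˣ)
    (w : (Module.End L N)ˣ) : Module.End L M :=
  (2 : L)⁻¹ • (u + ↑(Units.map (e.symm.conjRingEquiv : Module.End L N →* Module.End L M) w)⁻¹)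

theorem LinearEquiv.conjRingEquiv_smul (e : M ≃ₛₗ[σ] N) (c : L) (f : Module.End L M) :
    e.conjRingEquiv (c • f) = σ c • e.conjRingEquiv f := by
  ext; simp [map_smulₛₗ]

theorem LinearEquiv.conjRingEquiv_symm_conjRingEquiv (e : M ≃ₛₗ[σ] N) (f : Module.End L M) :
    e.symm.conjRingEquiv (e.conjRingEquiv f) = f := by
  ext; simp

theorem conjRingEquiv_stabilize_symm (e : M ≃ₛₗ[σ] N) (u : (Module.End L M)ˣ)
    (w : (Module.End L N)ˣ) :
    e.symm.conjRingEquiv (stabilize e.symm w u) =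
      (2 : L)⁻¹ • (e.symm.conjRingEquiv w + ↑u⁻¹) := by
  rw [stabilize, e.symm.conjRingEquiv_smul, map_inv₀, map_ofNat, map_add, Units.coe_map_inv]
  simp [LinearEquiv.conjRingEquiv_symm_conjRingEquiv]

theorem commute_stabilize (e : M ≃ₛₗ[σ] N) {u : (Module.End L M)ˣ} {w : (Module.End L N)ˣ}
    (h : Commute (u : Module.End L M) (e.symm.conjRingEquiv w)) :
    Commute (stabilize e u w) (e.symm.conjRingEquiv (stabilize e.symm w u)) := by
  rw [conjRingEquiv_stabilize_symm]
  exact ((Units.commute_add_inv_add_inv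
    (v := Units.map (e.symm.conjRingEquiv : Module.End L N →* Module.End L M) w) h).smul_left
      _).smul_right _

theorem exists_isNilpotent_stabilize_eq_add (e : M ≃ₛₗ[σ] N)
    {u : (Module.End L M)ˣ} {w : (Module.End L N)ˣ} (h2 : (2 : L) ≠ 0)
    (h : Commute (u : Module.End L M) (e.symm.conjRingEquiv w))
    (hu : IsNilpotent ((u : Module.End L M) - 1)) (hw : IsNilpotent ((w : Module.End L N) - 1)) :
    ∃ m : Module.End L M, IsNilpotent m ∧ ∀ x, stabilize e u w x = x + m x := by
  refine ⟨stabilize e u w - 1, ?_, fun x => (add_sub_cancel x _).symm⟩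
  set v := Units.map (e.symm.conjRingEquiv : Module.End L N →* Module.End L M) w
  have hv : IsNilpotent ((v : Module.End L M) - 1) := by
    rw [Units.coe_map, MonoidHom.coe_coe, ← map_one e.symm.conjRingEquiv, ← map_sub]
    exact hw.map _
  exact isNilpotent_half_smul_add_sub_one h2 h.units_inv_right hu
    (Units.isNilpotent_inv_sub_one hv)

end Stabilize

theorem Module.End.invFun_coe_units {R M : Type*} [Semiring R] [AddCommMonoid M] [Module R M]
    (u : (Module.End R M)ˣ) :
    Function.invFun ⇑(u : Module.End R M) = ⇑(↑u⁻¹ : Module.End R M) :=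
  Function.invFun_eq_of_injective_of_rightInverse
    (Function.LeftInverse.injective (g := ⇑(↑u⁻¹ : Module.End R M)) fun x => by
      rw [← Module.End.mul_apply, Units.inv_mul, Module.End.one_apply])
    fun x => by rw [← Module.End.mul_apply, Units.mul_inv, Module.End.one_apply]

section Restriction

variable {L : Type*} [Field L] {σ : L →+* L} [RingHomInvPair σ σ]
  {W : Type*} [AddCommGroup W] [Module L W] {p q : Submodule L W}

def LinearEquiv.restrictOfInvolutive (θ : W →ₛₗ[σ] W) (hθ : Function.Involutive θ)
    (hpq : ∀ x ∈ p, θ x ∈ q) (hqp : ∀ x ∈ q, θ x ∈ p) : p ≃ₛₗ[σ] q :=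
  .ofLinearMap (θ.restrict hpq) (θ.restrict hqp) (by ext; simp [hθ _]) (by ext; simp [hθ _])

variable {θ : W → W} (hpq : ∀ x ∈ p, θ x ∈ q) (hqp : ∀ x ∈ q, θ x ∈ p) (e : p ≃ₛₗ[σ] q)

theorem conjFun_eq_conjRingEquiv (he : ∀ x : p, (e x : W) = θ x)
    (he' : ∀ y : q, (e.symm y : W) = θ y) (f : Module.End L q) :
    conjFun θ q q p p f hpq hqp = e.symm.conjRingEquiv f := by
  ext x
  simp [conjFun, he', show e x = ⟨θ x, hpq x x.2⟩ from Subtype.ext (he x)]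

theorem stabStep_eq_stabilize (he : ∀ x : p, (e x : W) = θ x)
    (he' : ∀ y : q, (e.symm y : W) = θ y) (u : (Module.End L p)ˣ) (w : (Module.End L q)ˣ) :
    stabStep θ p q p q hpq hqp ⇑(u : Module.End L p) ⇑(w : Module.End L q) =
      (⇑(stabilize e u w), ⇑(stabilize e.symm w u)) := by
  rw [stabStep, conjFun_eq_conjRingEquiv hpq hqp e he he',
    conjFun_eq_conjRingEquiv hqp hpq e.symm he' he]
  have hw : e.symm.conjRingEquiv (w : Module.End L q) =
      ↑(Units.map (e.symm.conjRingEquiv : Module.End L q →* Module.End L p) w) := rfl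
  have hu : e.symm.symm.conjRingEquiv (u : Module.End L p) =
      ↑(Units.map (e.symm.symm.conjRingEquiv : Module.End L p →* Module.End L q) u) := rfl
  rw [hw, hu, Module.End.invFun_coe_units, Module.End.invFun_coe_units]
  rfl

end Restriction

section Galois

variable {K L : Type*} [Field K] [Field L] [Algebra K L]

theorem AlgEquiv.involutive_of_finrank_eq_two [IsGalois K L] (h : Module.finrank K L = 2)
    (τ : L ≃ₐ[K] L) : Function.Involutive τ := by
  have : FiniteDimensional K L := Module.finite_of_finrank_eq_succ h
  have hτ : τ ^ 2 = 1 := h ▸ IsGalois.card_aut_eq_finrank K L ▸ pow_card_eq_one'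
  exact fun a => by simpa [sq] using AlgEquiv.congr_fun hτ a

variable (τ : L ≃ₐ[K] L) (WK : Type*) [AddCommGroup WK] [Module K WK]

noncomputable def thetaMapₛₗ : L ⊗[K] WK →ₛₗ[(τ : L →+* L)] L ⊗[K] WK where
  toFun := thetaMap K L τ WK
  map_add' := map_add _
  map_smul' a x := by
    induction x using TensorProduct.induction_on with
    | zero => simp [thetaMap]
    | tmul b w => simp [thetaMap, TensorProduct.smul_tmul']
    | add x y hx hy => simp_all [thetaMap]

variable {τ WK} in
theorem thetaMapₛₗ_involutive (hτ : Function.Involutive τ) :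
    Function.Involutive (thetaMapₛₗ τ WK) := by
  intro x
  induction x using TensorProduct.induction_on with
  | zero => simp only [map_zero]
  | tmul a w =>
    change thetaMap K L τ WK (thetaMap K L τ WK (a ⊗ₜ w)) = a ⊗ₜ w
    simp [thetaMap, hτ a]
  | add x y hx hy => rw [map_add, map_add, hx, hy]

end Galois

theorem stmt_5_general (K L : Type*) [Field K] [Field L] [Algebra K L] [IsGalois K L]
    (hdeg : Module.finrank K L = 2) (hchar : (2 : K) ≠ 0)
    (τ : L ≃ₐ[K] L)
    (WK : Type*) [AddCommGroup WK] [Module K WK]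
    (Wp Wm : Submodule L (L ⊗[K] WK))
    (hWp : ∀ x : L ⊗[K] WK, x ∈ Wp ↔ thetaMap K L τ WK x ∈ Wm)
    (hWm : ∀ x : L ⊗[K] WK, x ∈ Wm ↔ thetaMap K L τ WK x ∈ Wp)
    (φp : ↥Wp →ₗ[L] ↥Wp) (φm : ↥Wm →ₗ[L] ↥Wm)
    (hφp : Function.Bijective φp) (hφm : Function.Bijective φm)
    (hcomm1 : ∀ x : ↥Wp,
      φp (conjFun (thetaMap K L τ WK) Wm Wm Wp Wp (⇑φm)
        (fun x hx => (hWp x).mp hx) (fun x hx => (hWm x).mp hx) x)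
      = conjFun (thetaMap K L τ WK) Wm Wm Wp Wp (⇑φm)
        (fun x hx => (hWp x).mp hx) (fun x hx => (hWm x).mp hx) (φp x))
    (hcomm2 : ∀ y : ↥Wm,
      φm (conjFun (thetaMap K L τ WK) Wp Wp Wm Wm (⇑φp)
        (fun x hx => (hWm x).mp hx) (fun x hx => (hWp x).mp hx) y)
      = conjFun (thetaMap K L τ WK) Wp Wp Wm Wm (⇑φp)
        (fun x hx => (hWm x).mp hx) (fun x hx => (hWp x).mp hx) (φm y)) :
    ((∀ x : ↥Wp,
      (stabStep (thetaMap K L τ WK) Wp Wm Wp Wm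
          (fun x hx => (hWp x).mp hx) (fun x hx => (hWm x).mp hx) (⇑φp) (⇑φm)).1
        (conjFun (thetaMap K L τ WK) Wm Wm Wp Wp
          ((stabStep (thetaMap K L τ WK) Wp Wm Wp Wm
            (fun x hx => (hWp x).mp hx) (fun x hx => (hWm x).mp hx) (⇑φp) (⇑φm)).2)
          (fun x hx => (hWp x).mp hx) (fun x hx => (hWm x).mp hx) x)
      = conjFun (thetaMap K L τ WK) Wm Wm Wp Wp
          ((stabStep (thetaMap K L τ WK) Wp Wm Wp Wm
            (fun x hx => (hWp x).mp hx) (fun x hx => (hWm x).mp hx) (⇑φp) (⇑φm)).2)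
          (fun x hx => (hWp x).mp hx) (fun x hx => (hWm x).mp hx)
          ((stabStep (thetaMap K L τ WK) Wp Wm Wp Wm
            (fun x hx => (hWp x).mp hx) (fun x hx => (hWm x).mp hx) (⇑φp) (⇑φm)).1 x)) ∧
     (∀ y : ↥Wm,
      (stabStep (thetaMap K L τ WK) Wp Wm Wp Wm
          (fun x hx => (hWp x).mp hx) (fun x hx => (hWm x).mp hx) (⇑φp) (⇑φm)).2
        (conjFun (thetaMap K L τ WK) Wp Wp Wm Wm
          ((stabStep (thetaMap K L τ WK) Wp Wm Wp Wm
            (fun x hx => (hWp x).mp hx) (fun x hx => (hWm x).mp hx) (⇑φp) (⇑φm)).1)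
          (fun x hx => (hWm x).mp hx) (fun x hx => (hWp x).mp hx) y)
      = conjFun (thetaMap K L τ WK) Wp Wp Wm Wm
          ((stabStep (thetaMap K L τ WK) Wp Wm Wp Wm
            (fun x hx => (hWp x).mp hx) (fun x hx => (hWm x).mp hx) (⇑φp) (⇑φm)).1)
          (fun x hx => (hWm x).mp hx) (fun x hx => (hWp x).mp hx)
          ((stabStep (thetaMap K L τ WK) Wp Wm Wp Wm
            (fun x hx => (hWp x).mp hx) (fun x hx => (hWm x).mp hx) (⇑φp) (⇑φm)).2 y))) ∧
    (IsNilpotent (@HSub.hSub _ _ _ (@instHSub _ (@LinearMap.addCommGroup L L ↥Wp ↥Wp _ _ _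
      (Submodule.addCommGroup Wp) _ _ _).toSub) φp LinearMap.id) → IsNilpotent (@HSub.hSub _ _ _ (@instHSub _ (@LinearMap.addCommGroup L L ↥Wm ↥Wm _ _ _
      (Submodule.addCommGroup Wm) _ _ _).toSub) φm LinearMap.id) →
      (∃ mp : ↥Wp →ₗ[L] ↥Wp, IsNilpotent mp ∧ ∀ x : ↥Wp,
        (stabStep (thetaMap K L τ WK) Wp Wm Wp Wm
          (fun x hx => (hWp x).mp hx) (fun x hx => (hWm x).mp hx) (⇑φp) (⇑φm)).1 x
        = x + mp x) ∧
      (∃ mm : ↥Wm →ₗ[L] ↥Wm, IsNilpotent mm ∧ ∀ y : ↥Wm,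
        (stabStep (thetaMap K L τ WK) Wp Wm Wp Wm
          (fun x hx => (hWp x).mp hx) (fun x hx => (hWm x).mp hx) (⇑φp) (⇑φm)).2 y
        = y + mm y)) := by
  have hτ := AlgEquiv.involutive_of_finrank_eq_two hdeg τ
  have h2 : (2 : L) ≠ 0 := by
    simpa only [map_ofNat] using (map_ne_zero (algebraMap K L)).2 hchar
  let _ : RingHomInvPair (τ : L →+* L) τ := ⟨RingHom.ext hτ, RingHom.ext hτ⟩
  have hpq : ∀ x ∈ Wp, thetaMap K L τ WK x ∈ Wm := fun x hx => (hWp x).mp hx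
  have hqp : ∀ x ∈ Wm, thetaMap K L τ WK x ∈ Wp := fun x hx => (hWm x).mp hx
  let e := LinearEquiv.restrictOfInvolutive (thetaMapₛₗ τ WK) (thetaMapₛₗ_involutive hτ) hpq hqp
  obtain ⟨up, rfl⟩ := (Module.End.isUnit_iff φp).2 hφp
  obtain ⟨um, rfl⟩ := (Module.End.isUnit_iff φm).2 hφm
  have hstab := stabStep_eq_stabilize hpq hqp e (fun _ => rfl) (fun _ => rfl) up um
  have hconj := conjFun_eq_conjRingEquiv hpq hqp e (fun _ => rfl) (fun _ => rfl)
  have hconj' := conjFun_eq_conjRingEquiv hqp hpq e.symm (fun _ => rfl) (fun _ => rfl)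
  rw [hconj] at hcomm1
  rw [hconj'] at hcomm2
  have hc1 : Commute (up : Module.End L Wp) (e.symm.conjRingEquiv um) := LinearMap.ext hcomm1
  have hc2 : Commute (um : Module.End L Wm) (e.symm.symm.conjRingEquiv up) := LinearMap.ext hcomm2
  simp only [hstab, hconj, hconj']
  -- `Module.End L Wp` occurs with two defeq `AddCommMonoid` instances (`Submodule.addCommMonoid`
  -- and `AddCommGroup.toAddCommMonoid`); naming `M`, `N`, `u`, `w` spares unification from
  -- reconciling them through metavariables.
  refine ⟨⟨fun x => ?_, fun y => ?_⟩, fun hnilp hnilm => ⟨?_, ?_⟩⟩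
  · exact (LinearMap.congr_fun (commute_stabilize (M := Wp) (N := Wm) e hc1).eq x :)
  · exact (LinearMap.congr_fun (commute_stabilize (M := Wm) (N := Wp) e.symm hc2).eq y :)
  · obtain ⟨m, hm, hS⟩ := exists_isNilpotent_stabilize_eq_add (M := Wp) (N := Wm)
      (u := up) (w := um) e h2 hc1 hnilp hnilm
    exact ⟨m, hm, hS⟩
  · obtain ⟨m, hm, hS⟩ := exists_isNilpotent_stabilize_eq_add (M := Wm) (N := Wp)
      (u := um) (w := up) e.symm h2 hc2 hnilm hnilp
    exact ⟨m, hm, hS⟩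

/-- **Unipotent stabilization: the addendum.**
In the setting of unipotent stabilization (`L/K` quadratic Galois,
`char K ≠ 2`, `τ` the nontrivial Galois element, `θ` the induced semilinear
involution of `W_L = L ⊗[K] W_K`), assume additionally `W₊ = θ(W₋)` and
`W₋ = θ(W₊)`, and let `φ₊ : W₊ → W₊`, `φ₋ : W₋ → W₋` be `L`-linear
isomorphisms with `φ₋^τ ∘ φ₊ = id + n`, `n` nilpotent. With
`φ̃₊ := ½(φ₊ + (φ₋^τ)⁻¹)`, `φ̃₋ := ½(φ₋ + (φ₊^τ)⁻¹)`:
(1) if `φ₊ ∘ φ₋^τ = φ₋^τ ∘ φ₊` and `φ₋ ∘ φ₊^τ = φ₊^τ ∘ φ₋`, then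
`φ̃₊ ∘ φ̃₋^τ = φ̃₋^τ ∘ φ̃₊` and `φ̃₋ ∘ φ̃₊^τ = φ̃₊^τ ∘ φ̃₋`;
(2) if moreover `φ₊ = id + m₊`, `φ₋ = id + m₋` with `m₊, m₋` nilpotent, then
`φ̃₊ = id + m̃₊`, `φ̃₋ = id + m̃₋` with `m̃₊, m̃₋` nilpotent. -/
theorem stmt_5 (K L : Type*) [Field K] [Field L] [Algebra K L] [IsGalois K L]
    (hdeg : Module.finrank K L = 2) (hchar : (2 : K) ≠ 0)
    (τ : L ≃ₐ[K] L) (hτ : τ ≠ 1)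
    (WK : Type*) [AddCommGroup WK] [Module K WK]
    (Wp Wm : Submodule L (L ⊗[K] WK))
    (hWp : ∀ x : L ⊗[K] WK, x ∈ Wp ↔ thetaMap K L τ WK x ∈ Wm)
    (hWm : ∀ x : L ⊗[K] WK, x ∈ Wm ↔ thetaMap K L τ WK x ∈ Wp)
    (φp : ↥Wp →ₗ[L] ↥Wp) (φm : ↥Wm →ₗ[L] ↥Wm)
    (hφp : Function.Bijective φp) (hφm : Function.Bijective φm)
    (n : ↥Wp →ₗ[L] ↥Wp) (hn : IsNilpotent n)
    (hcomp : ∀ x : ↥Wp,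
      conjFun (thetaMap K L τ WK) Wm Wm Wp Wp (⇑φm)
        (fun x hx => (hWp x).mp hx) (fun x hx => (hWm x).mp hx) (φp x)
      = x + n x)
    (hcomm1 : ∀ x : ↥Wp,
      φp (conjFun (thetaMap K L τ WK) Wm Wm Wp Wp (⇑φm)
        (fun x hx => (hWp x).mp hx) (fun x hx => (hWm x).mp hx) x)
      = conjFun (thetaMap K L τ WK) Wm Wm Wp Wp (⇑φm)
        (fun x hx => (hWp x).mp hx) (fun x hx => (hWm x).mp hx) (φp x))
    (hcomm2 : ∀ y : ↥Wm,
      φm (conjFun (thetaMap K L τ WK) Wp Wp Wm Wm (⇑φp)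
        (fun x hx => (hWm x).mp hx) (fun x hx => (hWp x).mp hx) y)
      = conjFun (thetaMap K L τ WK) Wp Wp Wm Wm (⇑φp)
        (fun x hx => (hWm x).mp hx) (fun x hx => (hWp x).mp hx) (φm y)) :
    ((∀ x : ↥Wp,
      (stabStep (thetaMap K L τ WK) Wp Wm Wp Wm
          (fun x hx => (hWp x).mp hx) (fun x hx => (hWm x).mp hx) (⇑φp) (⇑φm)).1
        (conjFun (thetaMap K L τ WK) Wm Wm Wp Wp
          ((stabStep (thetaMap K L τ WK) Wp Wm Wp Wm
            (fun x hx => (hWp x).mp hx) (fun x hx => (hWm x).mp hx) (⇑φp) (⇑φm)).2)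
          (fun x hx => (hWp x).mp hx) (fun x hx => (hWm x).mp hx) x)
      = conjFun (thetaMap K L τ WK) Wm Wm Wp Wp
          ((stabStep (thetaMap K L τ WK) Wp Wm Wp Wm
            (fun x hx => (hWp x).mp hx) (fun x hx => (hWm x).mp hx) (⇑φp) (⇑φm)).2)
          (fun x hx => (hWp x).mp hx) (fun x hx => (hWm x).mp hx)
          ((stabStep (thetaMap K L τ WK) Wp Wm Wp Wm
            (fun x hx => (hWp x).mp hx) (fun x hx => (hWm x).mp hx) (⇑φp) (⇑φm)).1 x)) ∧
     (∀ y : ↥Wm,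
      (stabStep (thetaMap K L τ WK) Wp Wm Wp Wm
          (fun x hx => (hWp x).mp hx) (fun x hx => (hWm x).mp hx) (⇑φp) (⇑φm)).2
        (conjFun (thetaMap K L τ WK) Wp Wp Wm Wm
          ((stabStep (thetaMap K L τ WK) Wp Wm Wp Wm
            (fun x hx => (hWp x).mp hx) (fun x hx => (hWm x).mp hx) (⇑φp) (⇑φm)).1)
          (fun x hx => (hWm x).mp hx) (fun x hx => (hWp x).mp hx) y)
      = conjFun (thetaMap K L τ WK) Wp Wp Wm Wm
          ((stabStep (thetaMap K L τ WK) Wp Wm Wp Wm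
            (fun x hx => (hWp x).mp hx) (fun x hx => (hWm x).mp hx) (⇑φp) (⇑φm)).1)
          (fun x hx => (hWm x).mp hx) (fun x hx => (hWp x).mp hx)
          ((stabStep (thetaMap K L τ WK) Wp Wm Wp Wm
            (fun x hx => (hWp x).mp hx) (fun x hx => (hWm x).mp hx) (⇑φp) (⇑φm)).2 y))) ∧
    (IsNilpotent (@HSub.hSub _ _ _ (@instHSub _ (@LinearMap.addCommGroup L L ↥Wp ↥Wp _ _ _
      (Submodule.addCommGroup Wp) _ _ _).toSub) φp LinearMap.id) → IsNilpotent (@HSub.hSub _ _ _ (@instHSub _ (@LinearMap.addCommGroup L L ↥Wm ↥Wm _ _ _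
      (Submodule.addCommGroup Wm) _ _ _).toSub) φm LinearMap.id) →
      (∃ mp : ↥Wp →ₗ[L] ↥Wp, IsNilpotent mp ∧ ∀ x : ↥Wp,
        (stabStep (thetaMap K L τ WK) Wp Wm Wp Wm
          (fun x hx => (hWp x).mp hx) (fun x hx => (hWm x).mp hx) (⇑φp) (⇑φm)).1 x
        = x + mp x) ∧
      (∃ mm : ↥Wm →ₗ[L] ↥Wm, IsNilpotent mm ∧ ∀ y : ↥Wm,
        (stabStep (thetaMap K L τ WK) Wp Wm Wp Wm
          (fun x hx => (hWp x).mp hx) (fun x hx => (hWm x).mp hx) (⇑φp) (⇑φm)).2 y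
        = y + mm y)) :=
  stmt_5_general K L hdeg hchar τ WK Wp Wm hWp hWm φp φm hφp hφm hcomm1 hcomm2
end

section
/- In the setting of unipotent stabilization (L/K quadratic Galois, char K ≠ 2, τ the nontrivial Galois element, θ the induced semilinear involution of W_L = L ⊗_K W_K, L-subspaces W_± ⊆ W_L, L-linear isomorphisms φ_± : W_± → θ(W_∓) with φ_-^τ ∘ φ_+ = id_{W_+} + n, n nilpotent), define recursively φ_±^{(0)} := φ_± and φ_±^{(k+1)} := (1/2)(φ_±^{(k)} + ((φ_∓^{(k)})^τ)^{-1}) for k ≥ 0. Then there exists k₀ ≥ 0 such that for all k ≥ k₀ one has φ_±^{(k)} = φ_±^{(k₀)} and (φ_∓^{(k)})^τ ∘ φ_±^{(k)} = id_{W_±}. -/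
open scoped TensorProduct

/-- The recursively defined sequence of unipotent stabilization:
`φ_±^{(0)} := φ_±` and `φ_±^{(k+1)} := ½(φ_±^{(k)} + ((φ_∓^{(k)})^τ)⁻¹)`. -/
noncomputable def stabSeq {L : Type*} [Field L] {WL : Type*} [AddCommGroup WL]
    [Module L WL] (θ : WL → WL) (Wp Wm Tp Tm : Submodule L WL)
    (h1 : ∀ x : WL, x ∈ Tp → θ x ∈ Wm) (h2 : ∀ x : WL, x ∈ Tm → θ x ∈ Wp)
    (fp : ↥Wp → ↥Tp) (fm : ↥Wm → ↥Tm) : ℕ → (↥Wp → ↥Tp) × (↥Wm → ↥Tm)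
  | 0 => (fp, fm)
  | k + 1 =>
      stabStep θ Wp Wm Tp Tm h1 h2
        (stabSeq θ Wp Wm Tp Tm h1 h2 fp fm k).1
        (stabSeq θ Wp Wm Tp Tm h1 h2 fp fm k).2

/-!
Fix an isomorphism `e : W₊ ≃ T₊` and write `φ₊ = e ∘ a`, `φ₋ = (b ∘ e⁻¹)^τ` with `a, b`
invertible endomorphisms of `W₊`, so that `φ₋^τ ∘ φ₊ = b a`. Since `((f^τ)⁻¹)^τ = f⁻¹`, one
stabilization step keeps `e` and replaces `(a, b)` by `(½(a + b⁻¹), ½(b + a⁻¹))`; hence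
`P = b a` becomes `¼(P + 2 + P⁻¹) = 1 + ¼ P⁻¹ (P - 1)²`. Each step therefore halves the
nilpotency index of `P - 1`, and once `P = 1`, i.e. `b = a⁻¹`, the pair is a fixed point.
-/

section Unipotent

variable {L R : Type*} [Field L] [Ring R] [Algebra L R]

theorem half_smul_add_inv_eq_inv_mul (h2 : (2 : L) ≠ 0) (a b : Rˣ) :
    (2 : L)⁻¹ • ((a : R) + ↑b⁻¹) = ↑b⁻¹ * (1 + (2 : L)⁻¹ • (↑b * ↑a - 1)) := by
  rw [mul_add, mul_one, mul_smul_comm, mul_sub, ← mul_assoc, Units.inv_mul, one_mul, mul_one]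
  match_scalars <;> field_simp; norm_num

theorem half_smul_add_inv_eq_mul_inv (h2 : (2 : L) ≠ 0) (a b : Rˣ) :
    (2 : L)⁻¹ • ((b : R) + ↑a⁻¹) = (1 + (2 : L)⁻¹ • (↑b * ↑a - 1)) * ↑a⁻¹ := by
  rw [add_mul, one_mul, smul_mul_assoc, sub_mul, mul_assoc, Units.mul_inv, one_mul, mul_one]
  match_scalars <;> field_simp; norm_num

theorem isUnit_half_smul_add_inv (h2 : (2 : L) ≠ 0) (a b : Rˣ)
    (hN : IsNilpotent ((b : R) * a - 1)) :
    IsUnit ((2 : L)⁻¹ • ((a : R) + ↑b⁻¹)) ∧ IsUnit ((2 : L)⁻¹ • ((b : R) + ↑a⁻¹)) := by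
  have hw := (hN.smul (2 : L)⁻¹).isUnit_one_add
  rw [half_smul_add_inv_eq_inv_mul h2, half_smul_add_inv_eq_mul_inv h2]
  exact ⟨b⁻¹.isUnit.mul hw, hw.mul a⁻¹.isUnit⟩

theorem half_smul_add_inv_mul_half_smul_add_inv_sub_one (h2 : (2 : L) ≠ 0) (a b : Rˣ) :
    (2 : L)⁻¹ • ((b : R) + ↑a⁻¹) * ((2 : L)⁻¹ • ((a : R) + ↑b⁻¹)) - 1 =
      (4 : L)⁻¹ • (↑a⁻¹ * ↑b⁻¹ * (↑b * ↑a - 1) ^ 2) := by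
  have hinv : (↑a⁻¹ * ↑b⁻¹ : R) * (↑b * ↑a) = 1 := by
    rw [mul_assoc, ← mul_assoc (↑b⁻¹ : R), Units.inv_mul, one_mul, Units.inv_mul]
  have hsq : (↑a⁻¹ * ↑b⁻¹ : R) * (↑b * ↑a - 1) ^ 2 = ↑b * ↑a - 1 - 1 + ↑a⁻¹ * ↑b⁻¹ := by
    rw [sq, ← mul_assoc, mul_sub (↑a⁻¹ * ↑b⁻¹ : R) _ 1, hinv, mul_one, sub_mul, one_mul,
      mul_sub, hinv, mul_one]
    abel
  have hprod : ((b : R) + ↑a⁻¹) * (↑a + ↑b⁻¹) = ↑b * ↑a + 1 + 1 + ↑a⁻¹ * ↑b⁻¹ := by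
    rw [add_mul, mul_add, mul_add, Units.mul_inv, Units.inv_mul]
    abel
  have h4 : (4 : L) ≠ 0 := by
    rw [show (4 : L) = 2 * 2 by norm_num]
    exact mul_ne_zero h2 h2
  rw [smul_mul_smul, hprod, hsq]
  match_scalars <;> field_simp <;> norm_num

theorem pow_half_smul_add_inv_mul_half_smul_add_inv_sub_one_eq_zero (h2 : (2 : L) ≠ 0)
    (a b : Rˣ) {j : ℕ} (hN : ((b : R) * a - 1) ^ (2 * j) = 0) :
    ((2 : L)⁻¹ • ((b : R) + ↑a⁻¹) * ((2 : L)⁻¹ • ((a : R) + ↑b⁻¹)) - 1) ^ j = 0 := by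
  have hcomm : Commute (↑a⁻¹ * ↑b⁻¹ : R) (↑b * ↑a - 1) := by
    rw [← Units.val_mul, ← mul_inv_rev, ← Units.val_mul]
    exact (Commute.refl _).units_inv_left.sub_right (Commute.one_right _)
  rw [half_smul_add_inv_mul_half_smul_add_inv_sub_one h2, smul_pow,
    (hcomm.pow_right 2).mul_pow, ← pow_mul, hN, mul_zero, smul_zero]

end Unipotent

section Conjugation

variable {L : Type*} [Field L] {σ : L →+* L} {WL : Type*} [AddCommGroup WL] [Module L WL]
  {θ : WL →ₛₗ[σ] WL} {A B C D : Submodule L WL}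

theorem conjFun_conjFun (hθ : Function.Involutive θ) (f : A → B)
    (hCA : ∀ x ∈ C, θ x ∈ A) (hBD : ∀ x ∈ B, θ x ∈ D)
    (hAC : ∀ x ∈ A, θ x ∈ C) (hDB : ∀ x ∈ D, θ x ∈ B) :
    conjFun θ C D A B (conjFun θ A B C D f hCA hBD) hAC hDB = f := by
  funext x
  ext
  simp [conjFun, hθ _]

theorem conjFun_leftInverse (hθ : Function.Involutive θ) {f : A → B} {g : B → A}
    (hgf : Function.LeftInverse g f)
    (hCA : ∀ x ∈ C, θ x ∈ A) (hBD : ∀ x ∈ B, θ x ∈ D)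
    (hAC : ∀ x ∈ A, θ x ∈ C) (hDB : ∀ x ∈ D, θ x ∈ B) :
    Function.LeftInverse (conjFun θ B A D C g hDB hAC) (conjFun θ A B C D f hCA hBD) := by
  intro x
  ext
  simp [conjFun, hθ _, hgf _]

theorem invFun_conjFun (hθ : Function.Involutive θ) (e : A ≃ₗ[L] B)
    (hCA : ∀ x ∈ C, θ x ∈ A) (hBD : ∀ x ∈ B, θ x ∈ D)
    (hAC : ∀ x ∈ A, θ x ∈ C) (hDB : ∀ x ∈ D, θ x ∈ B) :
    Function.invFun (conjFun θ A B C D e hCA hBD) = conjFun θ B A D C e.symm hDB hAC :=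
  Function.invFun_eq_of_injective_of_rightInverse
    (conjFun_leftInverse hθ e.left_inv hCA hBD hAC hDB).injective
    (conjFun_leftInverse hθ e.right_inv hDB hAC hBD hCA)

end Conjugation

theorem stabSeq_eq_of_stabStep_eq {L : Type*} [Field L] {WL : Type*} [AddCommGroup WL]
    [Module L WL] {θ : WL → WL} {Wp Wm Tp Tm : Submodule L WL}
    {h1 : ∀ x ∈ Tp, θ x ∈ Wm} {h2 : ∀ x ∈ Tm, θ x ∈ Wp} {fp : Wp → Tp} {fm : Wm → Tm}
    {k₀ : ℕ}
    (hfix : stabStep θ Wp Wm Tp Tm h1 h2 (stabSeq θ Wp Wm Tp Tm h1 h2 fp fm k₀).1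
        (stabSeq θ Wp Wm Tp Tm h1 h2 fp fm k₀).2 = stabSeq θ Wp Wm Tp Tm h1 h2 fp fm k₀)
    {k : ℕ} (hk : k₀ ≤ k) :
    stabSeq θ Wp Wm Tp Tm h1 h2 fp fm k = stabSeq θ Wp Wm Tp Tm h1 h2 fp fm k₀ := by
  induction k, hk using Nat.le_induction with
  | base => rfl
  | succ k _ ih => rw [stabSeq, ih, hfix]

section Stabilization

open LinearMap.GeneralLinearGroup

variable {L : Type*} [Field L] {σ : L →+* L} {WL : Type*} [AddCommGroup WL] [Module L WL]
  (θ : WL →ₛₗ[σ] WL) {Wp Wm Tp Tm : Submodule L WL}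
  (hTpWm : ∀ x ∈ Tp, θ x ∈ Wm) (hTmWp : ∀ x ∈ Tm, θ x ∈ Wp)
  (hWmTp : ∀ x ∈ Wm, θ x ∈ Tp) (hWpTm : ∀ x ∈ Wp, θ x ∈ Tm)

def stabPair (e : Wp ≃ₗ[L] Tp) (a b : Module.End L Wp) : (Wp → Tp) × (Wm → Tm) :=
  (e ∘ a, conjFun θ Tp Wp Wm Tm (b ∘ e.symm) hWmTp hWpTm)

variable {θ}

theorem stabStep_stabPair (hθ : Function.Involutive θ) (e : Wp ≃ₗ[L] Tp)
    (a b : (Module.End L Wp)ˣ) :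
    stabStep θ Wp Wm Tp Tm hTpWm hTmWp (stabPair θ hWmTp hWpTm e a b).1
        (stabPair θ hWmTp hWpTm e a b).2 =
      stabPair θ hWmTp hWpTm e ((2 : L)⁻¹ • (↑a + ↑b⁻¹)) ((2 : L)⁻¹ • (↑b + ↑a⁻¹)) := by
  have hfp : (stabPair θ hWmTp hWpTm e a b).1 = (toLinearEquiv a).trans e := rfl
  have hfm : conjFun θ Wm Tm Tp Wp (stabPair θ hWmTp hWpTm e a b).2 hTpWm hTmWp =
      e.symm.trans (toLinearEquiv b) :=
    conjFun_conjFun hθ _ hWmTp hWpTm hTpWm hTmWp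
  have hsymm : ∀ (u : (Module.End L Wp)ˣ) x,
      (toLinearEquiv u).symm x = (↑u⁻¹ : Module.End L Wp) x := fun _ _ => rfl
  simp only [stabStep]
  rw [hfm, hfp, invFun_conjFun hθ _ hTmWp hTpWm hWpTm hWmTp,
    Function.invFun_eq_of_injective_of_rightInverse (LinearEquiv.injective _)
      (LinearEquiv.right_inv _)]
  ext x
  · simp [stabPair, hsymm]
  · simp [stabPair, conjFun, hsymm, map_ofNat σ 2]

theorem stabStep_stabPair_inv (hθ : Function.Involutive θ) (h2 : (2 : L) ≠ 0)
    (e : Wp ≃ₗ[L] Tp) (a : (Module.End L Wp)ˣ) :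
    stabStep θ Wp Wm Tp Tm hTpWm hTmWp (stabPair θ hWmTp hWpTm e a ↑a⁻¹).1
        (stabPair θ hWmTp hWpTm e a ↑a⁻¹).2 = stabPair θ hWmTp hWpTm e a ↑a⁻¹ := by
  have half : ∀ f : Module.End L Wp, (2 : L)⁻¹ • (f + f) = f := fun f => by
    rw [← two_smul L f, smul_smul, inv_mul_cancel₀ h2, one_smul]
  rw [stabStep_stabPair hTpWm hTmWp hWmTp hWpTm hθ, inv_inv, half, half]

theorem stabSeq_stabPair (hθ : Function.Involutive θ) (h2 : (2 : L) ≠ 0)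
    (e : Wp ≃ₗ[L] Tp) (a b : (Module.End L Wp)ˣ) {m : ℕ}
    (hN : ((b : Module.End L Wp) * a - 1) ^ 2 ^ m = 0) {k : ℕ} (hk : k ≤ m) :
    ∃ a' b' : (Module.End L Wp)ˣ,
      stabSeq θ Wp Wm Tp Tm hTpWm hTmWp (stabPair θ hWmTp hWpTm e a b).1
          (stabPair θ hWmTp hWpTm e a b).2 k = stabPair θ hWmTp hWpTm e a' b' ∧
        ((b' : Module.End L Wp) * a' - 1) ^ 2 ^ (m - k) = 0 := by
  induction k with
  | zero => exact ⟨a, b, rfl, hN⟩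
  | succ k ih =>
    obtain ⟨a', b', hS, hN'⟩ := ih (by omega)
    rw [show m - k = m - (k + 1) + 1 by omega, pow_succ'] at hN'
    obtain ⟨⟨a'', ha''⟩, ⟨b'', hb''⟩⟩ := isUnit_half_smul_add_inv h2 a' b' ⟨_, hN'⟩
    refine ⟨a'', b'', ?_, ?_⟩
    · rw [stabSeq, hS, stabStep_stabPair hTpWm hTmWp hWmTp hWpTm hθ, ha'', hb'']
    · rw [ha'', hb'']
      exact pow_half_smul_add_inv_mul_half_smul_add_inv_sub_one_eq_zero h2 a' b' hN'

theorem conjFun_stabPair_inv_snd_apply_fst (hθ : Function.Involutive θ) (e : Wp ≃ₗ[L] Tp)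
    (a : (Module.End L Wp)ˣ) (x : Wp) :
    conjFun θ Wm Tm Tp Wp (stabPair θ hWmTp hWpTm e a ↑a⁻¹).2 hTpWm hTmWp
      ((stabPair θ hWmTp hWpTm e a ↑a⁻¹).1 x) = x := by
  ext
  simp [stabPair, conjFun, hθ _, ← Module.End.mul_apply]

theorem conjFun_stabPair_inv_fst_apply_snd (hθ : Function.Involutive θ) (e : Wp ≃ₗ[L] Tp)
    (a : (Module.End L Wp)ˣ) (y : Wm) :
    conjFun θ Wp Tp Tm Wm (stabPair θ hWmTp hWpTm e a ↑a⁻¹).1 hTmWp hTpWm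
      ((stabPair θ hWmTp hWpTm e a ↑a⁻¹).2 y) = y := by
  ext
  simp [stabPair, conjFun, hθ _, ← Module.End.mul_apply]

theorem stabPair_one_eq (hθ : Function.Involutive θ) (e : Wp ≃ₗ[L] Tp) (fm : Wm → Tm)
    (u : Module.End L Wp) (hcomp : ∀ x, conjFun θ Wm Tm Tp Wp fm hTpWm hTmWp (e x) = u x) :
    stabPair θ hWmTp hWpTm e 1 u = (⇑e, fm) := by
  have hconj : conjFun θ Wm Tm Tp Wp fm hTpWm hTmWp = u ∘ e.symm :=
    funext fun z => by simpa using hcomp (e.symm z)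
  unfold stabPair
  rw [← hconj, conjFun_conjFun hθ]
  rfl

theorem stabSeq_stabilizes (hWmTp : ∀ x ∈ Wm, θ x ∈ Tp) (hWpTm : ∀ x ∈ Wp, θ x ∈ Tm)
    (hθ : Function.Involutive θ) (h2 : (2 : L) ≠ 0)
    (fp : Wp →ₗ[L] Tp) (hfp : Function.Bijective fp) (fm : Wm → Tm)
    (n : Module.End L Wp) {m : ℕ} (hn : n ^ m = 0)
    (hcomp : ∀ x, conjFun θ Wm Tm Tp Wp fm hTpWm hTmWp (fp x) = x + n x) :
    ∃ k₀ : ℕ, ∀ k : ℕ, k₀ ≤ k →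
      stabSeq θ Wp Wm Tp Tm hTpWm hTmWp fp fm k = stabSeq θ Wp Wm Tp Tm hTpWm hTmWp fp fm k₀ ∧
      (∀ x, conjFun θ Wm Tm Tp Wp (stabSeq θ Wp Wm Tp Tm hTpWm hTmWp fp fm k).2 hTpWm hTmWp
        ((stabSeq θ Wp Wm Tp Tm hTpWm hTmWp fp fm k).1 x) = x) ∧
      (∀ y, conjFun θ Wp Tp Tm Wm (stabSeq θ Wp Wm Tp Tm hTpWm hTmWp fp fm k).1 hTmWp hTpWm
        ((stabSeq θ Wp Wm Tp Tm hTpWm hTmWp fp fm k).2 y) = y) := by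
  let e : Wp ≃ₗ[L] Tp := .ofBijective fp hfp
  obtain ⟨u, hu⟩ := IsNilpotent.isUnit_one_add ⟨m, hn⟩
  have hS₀ : stabPair θ hWmTp hWpTm e ↑(1 : (Module.End L Wp)ˣ) u = (⇑fp, fm) :=
    stabPair_one_eq hTpWm hTmWp hWmTp hWpTm hθ _ fm u fun x => by rw [hu]; exact hcomp x
  have hN : ((u : Module.End L Wp) * (1 : (Module.End L Wp)ˣ) - 1) ^ 2 ^ m = 0 := by
    rw [hu, Units.val_one, mul_one, add_sub_cancel_left]
    exact pow_eq_zero_of_le Nat.lt_two_pow_self.le hn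
  obtain ⟨a, b, hS, hba⟩ := stabSeq_stabPair hTpWm hTmWp hWmTp hWpTm hθ h2 e 1 u hN le_rfl
  rw [Nat.sub_self, pow_zero, pow_one, sub_eq_zero, ← Units.val_mul, ← Units.val_one,
    Units.val_inj, mul_eq_one_iff_eq_inv] at hba
  subst hba
  rw [hS₀] at hS
  refine ⟨m, fun k hk => ?_⟩
  rw [stabSeq_eq_of_stabStep_eq
    (by rw [hS]; exact stabStep_stabPair_inv hTpWm hTmWp hWmTp hWpTm hθ h2 e a) hk, hS]
  exact ⟨rfl, conjFun_stabPair_inv_snd_apply_fst hTpWm hTmWp hWmTp hWpTm hθ e a,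
    conjFun_stabPair_inv_fst_apply_snd hTpWm hTmWp hWmTp hWpTm hθ e a⟩

end Stabilization

section Theta

variable (K L : Type*) [Field K] [Field L] [Algebra K L] (τ : L ≃ₐ[K] L)
  (WK : Type*) [AddCommGroup WK] [Module K WK]

noncomputable def thetaSemilinearMap : L ⊗[K] WK →ₛₗ[(τ : L →+* L)] L ⊗[K] WK where
  toFun := thetaMap K L τ WK
  map_add' := map_add _
  map_smul' c x := by
    induction x using TensorProduct.induction_on with
    | zero => simp [thetaMap]
    | tmul a w => simp [thetaMap, TensorProduct.smul_tmul']
    | add x y hx hy => simp_all [thetaMap]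

theorem thetaMap_involutive [IsGalois K L] (hdeg : Module.finrank K L = 2) :
    Function.Involutive (thetaMap K L τ WK) := by
  have : FiniteDimensional K L := Module.finite_of_finrank_eq_succ hdeg
  have hτ : τ * τ = 1 := by
    have := pow_card_eq_one' (x := τ)
    rwa [IsGalois.card_aut_eq_finrank, hdeg, sq] at this
  have hττ : τ.toLinearMap ∘ₗ τ.toLinearMap = LinearMap.id :=
    LinearMap.ext fun a => DFunLike.congr_fun hτ a
  intro x
  rw [thetaMap, thetaMap, ← LinearMap.rTensor_comp_apply, hττ, LinearMap.rTensor_id_apply]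

end Theta

theorem stmt_6_general (K L : Type*) [Field K] [Field L] [Algebra K L] [IsGalois K L]
    (hdeg : Module.finrank K L = 2) (hchar : (2 : K) ≠ 0)
    (τ : L ≃ₐ[K] L)
    (WK : Type*) [AddCommGroup WK] [Module K WK]
    (Wp Wm Tp Tm : Submodule L (L ⊗[K] WK))
    (hTp : ∀ x : L ⊗[K] WK, x ∈ Tp ↔ thetaMap K L τ WK x ∈ Wm)
    (hTm : ∀ x : L ⊗[K] WK, x ∈ Tm ↔ thetaMap K L τ WK x ∈ Wp)
    (φp : ↥Wp →ₗ[L] ↥Tp) (φm : ↥Wm →ₗ[L] ↥Tm)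
    (hφp : Function.Bijective φp)
    (n : ↥Wp →ₗ[L] ↥Wp) (e : ℕ) (hne : n ^ e = 0)
    (hcomp : ∀ x : ↥Wp,
      conjFun (thetaMap K L τ WK) Wm Tm Tp Wp (⇑φm)
        (fun x hx => (hTp x).mp hx) (fun x hx => (hTm x).mp hx) (φp x)
      = x + n x) :
    ∃ k₀ : ℕ, ∀ k : ℕ, k₀ ≤ k →
      (stabSeq (thetaMap K L τ WK) Wp Wm Tp Tm
          (fun x hx => (hTp x).mp hx) (fun x hx => (hTm x).mp hx) (⇑φp) (⇑φm) k
        = stabSeq (thetaMap K L τ WK) Wp Wm Tp Tm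
          (fun x hx => (hTp x).mp hx) (fun x hx => (hTm x).mp hx) (⇑φp) (⇑φm) k₀) ∧
      (∀ x : ↥Wp,
        conjFun (thetaMap K L τ WK) Wm Tm Tp Wp
          ((stabSeq (thetaMap K L τ WK) Wp Wm Tp Tm
            (fun x hx => (hTp x).mp hx) (fun x hx => (hTm x).mp hx) (⇑φp) (⇑φm) k).2)
          (fun x hx => (hTp x).mp hx) (fun x hx => (hTm x).mp hx)
          ((stabSeq (thetaMap K L τ WK) Wp Wm Tp Tm
            (fun x hx => (hTp x).mp hx) (fun x hx => (hTm x).mp hx) (⇑φp) (⇑φm) k).1 x)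
        = x) ∧
      (∀ y : ↥Wm,
        conjFun (thetaMap K L τ WK) Wp Tp Tm Wm
          ((stabSeq (thetaMap K L τ WK) Wp Wm Tp Tm
            (fun x hx => (hTp x).mp hx) (fun x hx => (hTm x).mp hx) (⇑φp) (⇑φm) k).1)
          (fun x hx => (hTm x).mp hx) (fun x hx => (hTp x).mp hx)
          ((stabSeq (thetaMap K L τ WK) Wp Wm Tp Tm
            (fun x hx => (hTp x).mp hx) (fun x hx => (hTm x).mp hx) (⇑φp) (⇑φm) k).2 y)
        = y) := by
  have hθ := thetaMap_involutive K L τ WK hdeg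
  have h2 : (2 : L) ≠ 0 := by
    rw [← map_ofNat (algebraMap K L) 2]
    exact (map_ne_zero _).mpr hchar
  -- `⇑(thetaSemilinearMap K L τ WK)` unfolds to `thetaMap K L τ WK`.
  exact stabSeq_stabilizes (θ := thetaSemilinearMap K L τ WK) _ _
    (fun x hx => (hTp _).mpr (by rw [← hθ x] at hx; exact hx))
    (fun x hx => (hTm _).mpr (by rw [← hθ x] at hx; exact hx))
    hθ h2 φp hφp φm n hne hcomp

/-- **Unipotent stabilization: termination of the iteration.**
In the setting of unipotent stabilization (`L/K` quadratic Galois with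
`char K ≠ 2`, `τ` the nontrivial Galois element, `θ` the induced semilinear
involution of `W_L = L ⊗[K] W_K`, `L`-subspaces `W₊, W₋ ⊆ W_L` with
`T₊ = θ(W₋)`, `T₋ = θ(W₊)`, and `L`-linear isomorphisms `φ₊ : W₊ → θ(W₋)`,
`φ₋ : W₋ → θ(W₊)` with `φ₋^τ ∘ φ₊ = id + n`, `n` nilpotent), the recursively
defined sequence `φ_±^{(k)}` stabilizes: there is `k₀ ≥ 0` such that for all
`k ≥ k₀` one has `φ_±^{(k)} = φ_±^{(k₀)}` and
`(φ_∓^{(k)})^τ ∘ φ_±^{(k)} = id_{W_±}`. -/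
theorem stmt_6 (K L : Type*) [Field K] [Field L] [Algebra K L] [IsGalois K L]
    (hdeg : Module.finrank K L = 2) (hchar : (2 : K) ≠ 0)
    (τ : L ≃ₐ[K] L) (hτ : τ ≠ 1)
    (WK : Type*) [AddCommGroup WK] [Module K WK]
    (Wp Wm Tp Tm : Submodule L (L ⊗[K] WK))
    (hTp : ∀ x : L ⊗[K] WK, x ∈ Tp ↔ thetaMap K L τ WK x ∈ Wm)
    (hTm : ∀ x : L ⊗[K] WK, x ∈ Tm ↔ thetaMap K L τ WK x ∈ Wp)
    (φp : ↥Wp →ₗ[L] ↥Tp) (φm : ↥Wm →ₗ[L] ↥Tm)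
    (hφp : Function.Bijective φp) (hφm : Function.Bijective φm)
    (n : ↥Wp →ₗ[L] ↥Wp) (e : ℕ) (he : 1 ≤ e) (hne : n ^ e = 0)
    (hcomp : ∀ x : ↥Wp,
      conjFun (thetaMap K L τ WK) Wm Tm Tp Wp (⇑φm)
        (fun x hx => (hTp x).mp hx) (fun x hx => (hTm x).mp hx) (φp x)
      = x + n x) :
    ∃ k₀ : ℕ, ∀ k : ℕ, k₀ ≤ k →
      (stabSeq (thetaMap K L τ WK) Wp Wm Tp Tm
          (fun x hx => (hTp x).mp hx) (fun x hx => (hTm x).mp hx) (⇑φp) (⇑φm) k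
        = stabSeq (thetaMap K L τ WK) Wp Wm Tp Tm
          (fun x hx => (hTp x).mp hx) (fun x hx => (hTm x).mp hx) (⇑φp) (⇑φm) k₀) ∧
      (∀ x : ↥Wp,
        conjFun (thetaMap K L τ WK) Wm Tm Tp Wp
          ((stabSeq (thetaMap K L τ WK) Wp Wm Tp Tm
            (fun x hx => (hTp x).mp hx) (fun x hx => (hTm x).mp hx) (⇑φp) (⇑φm) k).2)
          (fun x hx => (hTp x).mp hx) (fun x hx => (hTm x).mp hx)
          ((stabSeq (thetaMap K L τ WK) Wp Wm Tp Tm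
            (fun x hx => (hTp x).mp hx) (fun x hx => (hTm x).mp hx) (⇑φp) (⇑φm) k).1 x)
        = x) ∧
      (∀ y : ↥Wm,
        conjFun (thetaMap K L τ WK) Wp Tp Tm Wm
          ((stabSeq (thetaMap K L τ WK) Wp Wm Tp Tm
            (fun x hx => (hTp x).mp hx) (fun x hx => (hTm x).mp hx) (⇑φp) (⇑φm) k).1)
          (fun x hx => (hTm x).mp hx) (fun x hx => (hTp x).mp hx)
          ((stabSeq (thetaMap K L τ WK) Wp Wm Tp Tm
            (fun x hx => (hTp x).mp hx) (fun x hx => (hTm x).mp hx) (⇑φp) (⇑φm) k).2 y)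
        = y) :=
  stmt_6_general K L hdeg hchar τ WK Wp Wm Tp Tm hTp hTm φp φm hφp n e hne hcomp
end
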